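/- Let G be an acyclic grade graph and let n be the cardinality of Nodes(G). Then G* = Σ_{i=0}^{n} Gⁱ, i.e., G*(x,y) = Σ_{i=0}^{n} Gⁱ(x,y) for all x, y ∈ V. -/

import Mathlib

open scoped Classical

/-- Weight of a path (nonempty list of vertices) in a grade graph. -/
def pathWeight {V R : Type*} [Semiring R] (G : V → V → R) : List V → R
  | [] => 1
  | [_] => 1
  | x :: y :: p => G x y * pathWeight G (y :: p)

/-- The set of non-source nodes of a grade graph. -/
def Nodes {V R : Type*} [Zero R] (G : V → V → R) : Set V := {y | ∃ x, G x y ≠ 0}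

/-- Paths from `x` to `y`: nonempty lists with head `x` and last element `y`. -/
def PathsBtw {V : Type*} (x y : V) : Set (List V) :=
  {p | p ≠ [] ∧ p.head? = some x ∧ p.getLast? = some y}

/-- A cycle: a path with more than one node and equal endpoints. -/
def IsCyclePath {V : Type*} (p : List V) : Prop := 1 < p.length ∧ p.head? = p.getLast?

/-- A grade graph is acyclic if every cycle has weight zero. -/
def Acyclic {V R : Type*} [Semiring R] (G : V → V → R) : Prop :=
  ∀ p : List V, IsCyclePath p → pathWeight G p = 0

/-- Reflexive and transitive closure of a grade graph:
`G*(x,y) = Σ_{p ∈ Paths(x,y)} w_G(p)`. -/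
noncomputable def gstar {V R : Type*} [Semiring R] (G : V → V → R) (x y : V) : R :=
  ∑ᶠ p ∈ PathsBtw x y, pathWeight G p

/-- Grade matrix multiplication. -/
noncomputable def matMul {V R : Type*} [Semiring R] (M₁ M₂ : V → V → R) (x y : V) : R :=
  ∑ᶠ z, M₁ x z * M₂ z y

/-- Identity grade matrix. -/
noncomputable def matId {V R : Type*} [Semiring R] (x y : V) : R := if x = y then 1 else 0

/-- `n`-fold product of a grade graph with itself, with `G⁰ = I`. -/
noncomputable def matPow {V R : Type*} [Semiring R] (G : V → V → R) : ℕ → V → V → R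
  | 0 => matId
  | n + 1 => matMul G (matPow G n)

/-- Multiplication of a grade context by a grade matrix:
`(γ·M)(x) = Σ_y γ(y)·M(y,x)`. -/
noncomputable def ctxMul {V R : Type*} [Semiring R] (γ : V → R) (M : V → V → R) (x : V) : R :=
  ∑ᶠ y, γ y * M y x

/-- A grade matrix: every row has finite support. -/
def RowFinite {V R : Type*} [Zero R] (M : V → V → R) : Prop :=
  ∀ x, {y | M x y ≠ 0}.Finite

/-! A path that repeats a vertex contains a cycle, whose weight is a factor of the path's weight,
so acyclicity kills it; and every vertex of a path of nonzero weight except the first lies in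
`Nodes G`. Hence only paths with at most `n = |Nodes G|` edges contribute to `G*(x, y)`. Grouping
the paths by their number of edges, those with `i` edges sum to `Gⁱ(x, y)`: splitting off the
first edge is exactly the recursion `Gⁱ⁺¹ = G · Gⁱ`. -/

open Function

theorem finsum_mem_eq_finsum_fiberwise {α β M : Type*} [AddCommMonoid M] {s : Set α}
    {f : α → M} (g : α → β) (h : (s ∩ support f).Finite) :
    ∑ᶠ a ∈ s, f a = ∑ᶠ b, ∑ᶠ a ∈ s ∩ g ⁻¹' {b}, f a := by
  classical
  have hfiber (b : β) : ∑ᶠ a ∈ s ∩ g ⁻¹' {b}, f a = ∑ a ∈ h.toFinset with g a = b, f a :=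
    finsum_mem_eq_sum_of_inter_support_eq f (by ext; simp; tauto)
  simp_rw [hfiber]
  rw [finsum_mem_eq_sum f h, finsum_eq_sum_of_support_subset _
    (Finset.support_of_fiberwise_sum_subset_image _ f g)]
  exact (Finset.sum_fiberwise_of_maps_to (fun a ha => Finset.mem_image_of_mem g ha) f).symm

theorem List.Nodup.length_le_ncard {α : Type*} {l : List α} {s : Set α} (hl : l.Nodup)
    (hs : s.Finite) (h : ∀ a ∈ l, a ∈ s) : l.length ≤ s.ncard := by
  classical
  calc l.length = (l.toFinset : Set α).ncard := by
        rw [Set.ncard_coe_finset, List.toFinset_card_of_nodup hl]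
    _ ≤ s.ncard := Set.ncard_le_ncard (fun a ha => h a (by simpa using ha)) hs

theorem Set.Finite.setOf_length_le_forall_mem {α : Type*} {s : Set α} (hs : s.Finite) (n : ℕ) :
    {l : List α | l.length ≤ n ∧ ∀ a ∈ l, a ∈ s}.Finite := by
  have := hs.to_subtype
  refine ((List.finite_length_le s n).image (List.map Subtype.val)).subset ?_
  rintro l ⟨hl, hmem⟩
  lift l to List s using hmem
  exact ⟨l, by simpa using hl, rfl⟩

theorem List.exists_eq_append_cons_append_cons_of_not_nodup {α : Type*} {l : List α}
    (hl : ¬ l.Nodup) : ∃ (a : α) (s t u : List α), l = s ++ a :: (t ++ a :: u) := by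
  induction l with
  | nil => simp at hl
  | cons b l ih =>
    by_cases hb : b ∈ l
    · obtain ⟨t, u, rfl⟩ := List.append_of_mem hb
      exact ⟨b, [], t, u, rfl⟩
    · obtain ⟨a, s, t, u, rfl⟩ := ih fun h => hl (List.nodup_cons.mpr ⟨hb, h⟩)
      exact ⟨a, b :: s, t, u, rfl⟩

section GradeGraph

variable {V R : Type*} [Semiring R] (G : V → V → R)

def PathsOfLength (x y : V) (k : ℕ) : Set (List V) :=
  {p | p ∈ PathsBtw x y ∧ p.length = k + 1}

theorem pathWeight_cons_cons (x y : V) (p : List V) :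
    pathWeight G (x :: y :: p) = G x y * pathWeight G (y :: p) := rfl

theorem pathWeight_append_cons (p : List V) (z : V) (q : List V) :
    pathWeight G (p ++ z :: q) = pathWeight G (p ++ [z]) * pathWeight G (z :: q) := by
  induction p with
  | nil => simp [pathWeight]
  | cons a p ih =>
    cases p with
    | nil => simp [pathWeight]
    | cons b p => simp only [List.cons_append, pathWeight_cons_cons] at ih ⊢; rw [ih, mul_assoc]

variable {G}

theorem Acyclic.pathWeight_eq_zero_of_not_nodup (hacyc : Acyclic G) {p : List V}
    (hp : ¬ p.Nodup) : pathWeight G p = 0 := by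
  obtain ⟨z, s, t, u, rfl⟩ := List.exists_eq_append_cons_append_cons_of_not_nodup hp
  have hcycle : IsCyclePath ((z :: t) ++ [z]) := ⟨by simp, by rw [List.getLast?_concat]; rfl⟩
  rw [pathWeight_append_cons G s, ← List.cons_append, pathWeight_append_cons G (z :: t),
    hacyc _ hcycle, zero_mul, mul_zero]

theorem mem_nodes_of_pathWeight_ne_zero {p : List V} (hp : pathWeight G p ≠ 0) {a : V}
    (ha : a ∈ p.tail) : a ∈ Nodes G := by
  induction p with
  | nil => simp at ha
  | cons x p ih =>
    cases p with
    | nil => simp at ha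
    | cons y p =>
      rw [pathWeight_cons_cons] at hp
      rcases List.mem_cons.mp ha with rfl | ha
      · exact ⟨x, left_ne_zero_of_mul hp⟩
      · exact ih (right_ne_zero_of_mul hp) ha

theorem Acyclic.length_le_ncard_nodes_add_one (hacyc : Acyclic G) (hnodes : (Nodes G).Finite)
    {p : List V} (hp : pathWeight G p ≠ 0) : p.length ≤ (Nodes G).ncard + 1 := by
  have hnodup : p.Nodup := by_contra fun h => hp (hacyc.pathWeight_eq_zero_of_not_nodup h)
  have htail := hnodup.tail.length_le_ncard hnodes fun a ha => mem_nodes_of_pathWeight_ne_zero hp ha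
  rw [List.length_tail] at htail
  omega

theorem finite_nodes (hG : {q : V × V | G q.1 q.2 ≠ 0}.Finite) : (Nodes G).Finite :=
  (hG.image Prod.snd).subset fun y ⟨x, hx⟩ => ⟨(x, y), hx, rfl⟩

theorem finite_pathsBtw_length_le_inter_support (hnodes : (Nodes G).Finite) (x y : V) (n : ℕ) :
    ({p | p ∈ PathsBtw x y ∧ p.length ≤ n} ∩ support (pathWeight G)).Finite := by
  refine ((hnodes.insert x).setOf_length_le_forall_mem n).subset ?_
  rintro p ⟨⟨⟨-, hhead, -⟩, hlen⟩, hw⟩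
  obtain ⟨q, rfl⟩ := List.head?_eq_some_iff.mp hhead
  refine ⟨hlen, fun a ha => ?_⟩
  rcases List.mem_cons.mp ha with rfl | ha
  · exact Set.mem_insert a _
  · exact Set.mem_insert_of_mem x (mem_nodes_of_pathWeight_ne_zero hw ha)

theorem finite_pathsOfLength_inter_support (hnodes : (Nodes G).Finite) (x y : V) (k : ℕ) :
    (PathsOfLength x y k ∩ support (pathWeight G)).Finite :=
  (finite_pathsBtw_length_le_inter_support hnodes x y (k + 1)).subset
    fun _ ⟨⟨hp, hlen⟩, hw⟩ => ⟨⟨hp, hlen.le⟩, hw⟩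

theorem pathsOfLength_zero (x y : V) : PathsOfLength x y 0 = {p | p = [x] ∧ x = y} := by
  ext p
  constructor
  · rintro ⟨⟨-, hhead, hlast⟩, hlen⟩
    obtain ⟨a, rfl⟩ := List.length_eq_one_iff.mp hlen
    simp_all
  · rintro ⟨rfl, rfl⟩
    exact ⟨⟨List.cons_ne_nil _ _, rfl, rfl⟩, rfl⟩

-- Paths are grouped by their second vertex; the default `x` of `headD` is never read, since these
-- paths have at least two vertices.
theorem pathsOfLength_succ_inter_preimage_second (x y z : V) (k : ℕ) :
    PathsOfLength x y (k + 1) ∩ (fun p => p.tail.headD x) ⁻¹' {z} =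
      (x :: ·) '' PathsOfLength z y k := by
  ext p
  constructor
  · rintro ⟨⟨⟨-, hhead, hlast⟩, hlen⟩, hz⟩
    obtain ⟨q, rfl⟩ := List.head?_eq_some_iff.mp hhead
    obtain ⟨b, r, rfl⟩ := List.exists_cons_of_length_eq_add_one (by simpa using hlen)
    simp_all [PathsOfLength, PathsBtw]
  · rintro ⟨q, ⟨⟨-, hhead, hlast⟩, hlen⟩, rfl⟩
    obtain ⟨r, rfl⟩ := List.head?_eq_some_iff.mp hhead
    simp_all [PathsOfLength, PathsBtw]

theorem matPow_eq_finsum_pathsOfLength (hnodes : (Nodes G).Finite) (k : ℕ) (x y : V) :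
    matPow G k x y = ∑ᶠ p ∈ PathsOfLength x y k, pathWeight G p := by
  induction k generalizing x with
  | zero =>
    rw [pathsOfLength_zero]
    by_cases hxy : x = y <;> simp [hxy, matPow, matId, pathWeight]
  | succ k ih =>
    have hfiber (z : V) : ∑ᶠ p ∈ PathsOfLength x y (k + 1) ∩ (fun p => p.tail.headD x) ⁻¹' {z},
        pathWeight G p = G x z * matPow G k z y := by
      rw [pathsOfLength_succ_inter_preimage_second, finsum_mem_image List.cons_injective.injOn, ih]
      calc ∑ᶠ q ∈ PathsOfLength z y k, pathWeight G (x :: q)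
          = ∑ᶠ q ∈ PathsOfLength z y k, G x z * pathWeight G q := by
            refine finsum_mem_congr rfl fun q ⟨⟨_, hhead, _⟩, _⟩ => ?_
            obtain ⟨r, rfl⟩ := List.head?_eq_some_iff.mp hhead
            rfl
        _ = G x z * ∑ᶠ q ∈ PathsOfLength z y k, pathWeight G q :=
            ((AddMonoidHom.mulLeft (G x z)).map_finsum_mem'
              (finite_pathsOfLength_inter_support hnodes z y k)).symm
    rw [finsum_mem_eq_finsum_fiberwise _ (finite_pathsOfLength_inter_support hnodes x y (k + 1))]
    exact finsum_congr fun z => (hfiber z).symm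

end GradeGraph

theorem gstar_eq_sum_pows_general {V R : Type*} [Semiring R]
    (G : V → V → R) (hG : {q : V × V | G q.1 q.2 ≠ 0}.Finite)
    (hacyc : Acyclic G) :
    ∀ x y : V, gstar G x y = ∑ i ∈ Finset.range ((Nodes G).ncard + 1), matPow G i x y := by
  intro x y
  have hnodes := finite_nodes hG
  set I : Finset ℕ := Finset.range ((Nodes G).ncard + 1)
  have hsupport : PathsBtw x y ∩ support (pathWeight G) =
      ⋃ i ∈ (I : Set ℕ), PathsOfLength x y i ∩ support (pathWeight G) := by
    ext p
    simp only [Set.mem_iUnion, Set.mem_inter_iff, Finset.mem_coe, I, Finset.mem_range]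
    constructor
    · rintro ⟨hp, hw⟩
      have hlen := hacyc.length_le_ncard_nodes_add_one hnodes hw
      have hpos := List.length_pos_iff.mpr hp.1
      exact ⟨p.length - 1, by omega, ⟨hp, by omega⟩, hw⟩
    · rintro ⟨i, -, ⟨hp, -⟩, hw⟩
      exact ⟨hp, hw⟩
  have hdisjoint : (I : Set ℕ).PairwiseDisjoint
      fun i => PathsOfLength x y i ∩ support (pathWeight G) :=
    fun i _ j _ hij => Set.disjoint_left.mpr fun p hi hj =>
      hij (Nat.add_right_cancel (hi.1.2.symm.trans hj.1.2))
  calc gstar G x y = ∑ᶠ p ∈ PathsBtw x y ∩ support (pathWeight G), pathWeight G p :=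
        (finsum_mem_inter_support _ _).symm
    _ = ∑ i ∈ I, ∑ᶠ p ∈ PathsOfLength x y i ∩ support (pathWeight G), pathWeight G p := by
        rw [hsupport, finsum_mem_biUnion hdisjoint I.finite_toSet
          fun i _ => finite_pathsOfLength_inter_support hnodes x y i, finsum_mem_coe_finset]
    _ = ∑ i ∈ I, matPow G i x y := by
        simp_rw [finsum_mem_inter_support, matPow_eq_finsum_pathsOfLength hnodes]

/-- For an acyclic grade graph `G` with `n = |Nodes(G)|`,
`G* = Σ_{i=0}^{n} Gⁱ` pointwise. -/
theorem gstar_eq_sum_pows {V R : Type*} [Semiring R] [PartialOrder R]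
    (hadd : ∀ a b c d : R, a ≤ b → c ≤ d → a + c ≤ b + d)
    (hmul : ∀ a b c d : R, a ≤ b → c ≤ d → a * c ≤ b * d)
    (hzero : ∀ r : R, r ≤ 0 → r = 0)
    (G : V → V → R) (hG : {q : V × V | G q.1 q.2 ≠ 0}.Finite)
    (hacyc : Acyclic G) :
    ∀ x y : V, gstar G x y = ∑ i ∈ Finset.range ((Nodes G).ncard + 1), matPow G i x y :=
  gstar_eq_sum_pows_general G hG hacyc
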